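/- arXiv:1404.3777 — 2 statements merged into one kernel-verified Lean document; each statement's English description precedes it below -/
import Mathlib

section
/- Let f : M → X be a surjective submetry from a complete Riemannian manifold with sec ≥ 1, and x, y ∈ X with dist(x,y) = diam X satisfying π/2 < diam X < π. Then for every z ∈ X with z ≠ x, dist(z,y) < diam X; that is, y is the unique point at maximal distance from x. -/
open Metric

/-- `γ` is a unit-speed minimizing geodesic from `x` to `y`, defined on `[0, dist x y]`. -/
def IsMinGeodesic {M : Type*} [MetricSpace M] (γ : ℝ → M) (x y : M) : Prop :=
  γ 0 = x ∧ γ (dist x y) = y ∧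
    ∀ s ∈ Set.Icc (0 : ℝ) (dist x y), ∀ t ∈ Set.Icc (0 : ℝ) (dist x y),
      dist (γ s) (γ t) = |s - t|

/-- Every pair of points is joined by a minimizing geodesic (this holds in any
complete Riemannian manifold by Hopf–Rinow). -/
def GeodesicSpace (M : Type*) [MetricSpace M] : Prop :=
  ∀ x y : M, ∃ γ : ℝ → M, IsMinGeodesic γ x y

/-- A set is convex if every minimizing geodesic between two of its points stays in it. -/
def IsConvexSet {M : Type*} [MetricSpace M] (C : Set M) : Prop :=
  ∀ x ∈ C, ∀ y ∈ C, ∀ γ : ℝ → M, IsMinGeodesic γ x y →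
    ∀ t ∈ Set.Icc (0 : ℝ) (dist x y), γ t ∈ C

/-- The comparison angle at the vertex opposite to side `c` of a triangle with side
lengths `a`, `b`, `c` in the unit round sphere (spherical law of cosines). -/
noncomputable def sphCompAngle (a b c : ℝ) : ℝ :=
  Real.arccos ((Real.cos c - Real.cos a * Real.cos b) / (Real.sin a * Real.sin b))

/-- Toponogov-type characterization of (sectional/Alexandrov) curvature `≥ 1`:
the (1+3)-point comparison condition, i.e. for every quadruple of points the three
spherical comparison angles at the first point add up to at most `2π`.  For a complete
Riemannian manifold this is equivalent to `sec ≥ 1`. -/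
def CurvGeOne (M : Type*) [MetricSpace M] : Prop :=
  ∀ p a b c : M,
    sphCompAngle (dist p a) (dist p b) (dist a b) +
      sphCompAngle (dist p b) (dist p c) (dist b c) +
        sphCompAngle (dist p c) (dist p a) (dist c a) ≤ 2 * Real.pi

/-- A map between metric spaces is a *submetry* if it maps every open ball
`B(p,r)` onto the open ball `B(f p, r)`. -/
def IsSubmetry {M X : Type*} [MetricSpace M] [MetricSpace X] (f : M → X) : Prop :=
  ∀ (p : M) (r : ℝ), 0 < r → f '' Metric.ball p r = Metric.ball (f p) r

/-- A submetry is 1-Lipschitz. -/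
lemma IsSubmetry.dist_le {M X : Type*} [MetricSpace M] [MetricSpace X] {f : M → X}
    (hf : IsSubmetry f) (p q : M) : dist (f p) (f q) ≤ dist p q := by
  by_contra h
  push_neg at h
  have hr : 0 < dist (f p) (f q) := lt_of_le_of_lt dist_nonneg h
  have hq : q ∈ ball p (dist (f p) (f q)) := by rwa [mem_ball, dist_comm]
  have hfq : f q ∈ ball (f p) (dist (f p) (f q)) := by
    rw [← hf p _ hr]; exact ⟨q, hq, rfl⟩
  rw [mem_ball, dist_comm] at hfq
  exact lt_irrefl _ hfq

/-- Points of `X` can be lifted near a given point of `M`. -/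
lemma IsSubmetry.lift {M X : Type*} [MetricSpace M] [MetricSpace X] {f : M → X}
    (hf : IsSubmetry f) (p : M) (x' : X) (r : ℝ) (h : dist x' (f p) < r) :
    ∃ q : M, f q = x' ∧ dist q p < r := by
  have hr : 0 < r := lt_of_le_of_lt dist_nonneg h
  have hx' : x' ∈ ball (f p) r := by rwa [mem_ball]
  rw [← hf p r hr] at hx'
  obtain ⟨q, hq, hfq⟩ := hx'
  exact ⟨q, hfq, by rwa [← mem_ball]⟩

set_option maxHeartbeats 1000000 in
/-- If `f : M → X` is a surjective submetry from a complete Riemannian manifold with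
`sec ≥ 1`, and `x, y ∈ X` realize the diameter of `X`, with `π/2 < diam X < π`, then
every point `z ≠ x` satisfies `dist z y < diam X`; i.e. `x` is the unique point of `X`
at maximal distance from `y`. -/
theorem unique_point_at_max_distance {M X : Type*}
    [MetricSpace M] [CompleteSpace M] [MetricSpace X]
    (hgeo : GeodesicSpace M) (hcurv : CurvGeOne M)
    (f : M → X) (hf : IsSubmetry f) (hsurj : Function.Surjective f)
    (x y : X) (hxy : dist x y = Metric.diam (Set.univ : Set X))
    (hlow : Real.pi / 2 < dist x y) (hhigh : dist x y < Real.pi) :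
    ∀ z : X, z ≠ x → dist z y < Metric.diam (Set.univ : Set X) := by
  intro z hz
  by_contra hge
  push_neg at hge
  have hπ := Real.pi_pos
  set d := dist x y with hd_def
  have hd0 : 0 < d := lt_trans (by positivity) hlow
  -- X is bounded
  have hb : Bornology.IsBounded (Set.univ : Set X) := by
    by_contra hub
    rw [Metric.diam_eq_zero_of_unbounded hub] at hxy
    exact absurd hxy (ne_of_gt hd0)
  have hle_diam : ∀ a b : X, dist a b ≤ d := fun a b => by
    rw [hxy]; exact dist_le_diam_of_mem hb trivial trivial
  have hzy : dist z y = d := le_antisymm (hle_diam z y) (hxy ▸ hge)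
  set t := dist x z with ht_def
  have ht0 : 0 < t := dist_pos.mpr (Ne.symm hz)
  have htd : t ≤ d := hle_diam x z
  -- choice of ε
  have hcosd : Real.cos d < 0 :=
    Real.cos_neg_of_pi_div_two_lt_of_lt hlow (by linarith)
  have hct1 : Real.cos (t / 2) < 1 := by
    have := Real.strictAntiOn_cos
      (show (0:ℝ) ∈ Set.Icc (0:ℝ) Real.pi from ⟨le_rfl, Real.pi_pos.le⟩)
      (show t / 2 ∈ Set.Icc (0:ℝ) Real.pi from ⟨by linarith, by linarith⟩)
      (by linarith)
    simpa using this
  have hF0 : Real.cos d < Real.cos (t / 2) * Real.cos d := by nlinarith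
  have hcont : ContinuousAt (fun ε : ℝ => Real.cos (t / 2) * Real.cos (d + ε)) 0 := by
    fun_prop
  have hF0' : Real.cos d < Real.cos (t / 2) * Real.cos (d + 0) := by simpa using hF0
  have h1 : ∀ᶠ ε in nhds (0 : ℝ),
      Real.cos d < Real.cos (t / 2) * Real.cos (d + ε) :=
    hcont.eventually (eventually_gt_nhds hF0')
  have h2 : ∀ᶠ ε in nhds (0 : ℝ), ε < Real.pi - d := eventually_lt_nhds (by linarith)
  obtain ⟨ε, ⟨hF, hεd⟩, hε0⟩ :=
    (((h1.and h2).filter_mono nhdsWithin_le_nhds).and self_mem_nhdsWithin).exists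
      (f := nhdsWithin (0 : ℝ) (Set.Ioi 0))
  have hdε : d + ε < Real.pi := by linarith
  -- lifts
  obtain ⟨xh, hfx⟩ := hsurj x
  obtain ⟨zh, hfz, hxzh⟩ := hf.lift xh z (t + ε) (by rw [hfx, dist_comm, ← ht_def]; linarith)
  set D := dist xh zh with hD_def
  have hDd : D < t + ε := by rwa [dist_comm zh xh] at hxzh
  have htD : t ≤ D := by
    have := hf.dist_le xh zh
    rwa [hfx, hfz, ← ht_def] at this
  have hD0 : 0 < D := lt_of_lt_of_le ht0 htD
  have hD2lt : D / 2 < Real.pi / 2 := by linarith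
  -- midpoint
  obtain ⟨γ, hγ0, hγD, hγd⟩ := hgeo xh zh
  set mh := γ (D / 2) with hmh_def
  have hmemD2 : D / 2 ∈ Set.Icc (0 : ℝ) (dist xh zh) := ⟨by linarith, by rw [← hD_def]; linarith⟩
  have hmem0 : (0 : ℝ) ∈ Set.Icc (0 : ℝ) (dist xh zh) := ⟨le_refl 0, dist_nonneg⟩
  have hmemD : dist xh zh ∈ Set.Icc (0 : ℝ) (dist xh zh) := ⟨dist_nonneg, le_refl _⟩
  have hmx : dist mh xh = D / 2 := by
    have := hγd (D / 2) hmemD2 0 hmem0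
    rw [hγ0] at this
    rw [hmh_def, this]
    rw [abs_of_nonneg (by linarith)]
    ring
  have hmz : dist mh zh = D / 2 := by
    have := hγd (D / 2) hmemD2 (dist xh zh) hmemD
    rw [hγD] at this
    rw [hmh_def, this, ← hD_def]
    rw [abs_of_nonpos (by linarith)]
    ring
  set m := f mh with hm_def
  have hmyd : dist m y ≤ d := hle_diam m y
  have hmy_ge : d - D / 2 ≤ dist m y := by
    have h1 : d ≤ dist x m + dist m y := dist_triangle x m y
    have h2 : dist x m ≤ D / 2 := by
      have h3 := hf.dist_le xh mh
      rw [hfx, ← hm_def] at h3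
      calc dist x m ≤ dist xh mh := h3
        _ = dist mh xh := dist_comm xh mh
        _ = D / 2 := hmx
    linarith
  obtain ⟨yh, hfy, hyh⟩ := hf.lift mh y (dist m y + ε) (by rw [← hm_def, dist_comm]; linarith)
  set s := dist mh yh with hs_def
  have hs_lt : s < d + ε := by
    have : dist yh mh < dist m y + ε := hyh
    rw [dist_comm] at this
    calc s < dist m y + ε := by rw [hs_def]; exact this
      _ ≤ d + ε := by linarith
  have hs_ge : d - D / 2 ≤ s := by
    have := hf.dist_le mh yh
    rw [← hm_def, hfy] at this
    calc d - D / 2 ≤ dist m y := hmy_ge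
      _ ≤ s := this
  have hs_pos : 0 < s := by
    have : D / 2 < d := lt_trans hD2lt hlow
    linarith
  have hs_lt_pi : s < Real.pi := lt_trans hs_lt hdε
  have hsinD2 : 0 < Real.sin (D / 2) :=
    Real.sin_pos_of_pos_of_lt_pi (by linarith) (by linarith)
  have hsins : 0 < Real.sin s := Real.sin_pos_of_pos_of_lt_pi hs_pos hs_lt_pi
  have hcosD2 : 0 < Real.cos (D / 2) :=
    Real.cos_pos_of_mem_Ioo ⟨by linarith, hD2lt⟩
  -- the comparison inequality
  have hsum := hcurv mh xh yh zh
  have hT3 : sphCompAngle (dist mh zh) (dist mh xh) (dist zh xh) = Real.pi := by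
    rw [hmz, hmx, dist_comm zh xh, ← hD_def]
    unfold sphCompAngle
    have hpy := Real.sin_sq_add_cos_sq (D / 2)
    have hcos2 : Real.cos D = 2 * Real.cos (D / 2) ^ 2 - 1 := by
      have := Real.cos_two_mul (D / 2)
      rw [show 2 * (D / 2) = D by ring] at this
      exact this
    have harg : (Real.cos D - Real.cos (D / 2) * Real.cos (D / 2)) /
        (Real.sin (D / 2) * Real.sin (D / 2)) = -1 := by
      rw [div_eq_iff (by positivity)]
      rw [hcos2]
      linear_combination hpy
    rw [harg, Real.arccos_neg_one]
  rw [hT3] at hsum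
  rw [hmx, ← hs_def, hmz] at hsum
  have hsum2 : sphCompAngle (D / 2) s (dist xh yh) +
      sphCompAngle s (D / 2) (dist yh zh) ≤ Real.pi := by linarith
  -- one of the two numerators is nonnegative
  have hone : 0 ≤ Real.cos (dist xh yh) - Real.cos (D / 2) * Real.cos s ∨
      0 ≤ Real.cos (dist yh zh) - Real.cos s * Real.cos (D / 2) := by
    by_contra hcon
    push_neg at hcon
    obtain ⟨hn1, hn2⟩ := hcon
    have h1 : Real.pi / 2 < sphCompAngle (D / 2) s (dist xh yh) := by
      unfold sphCompAngle
      apply lt_of_not_ge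
      intro hh
      have h0 := Real.arccos_le_pi_div_two.mp hh
      have hden : (0:ℝ) < Real.sin (D / 2) * Real.sin s := by positivity
      have := (le_div_iff₀ hden).mp h0
      linarith
    have h2 : Real.pi / 2 < sphCompAngle s (D / 2) (dist yh zh) := by
      unfold sphCompAngle
      apply lt_of_not_ge
      intro hh
      have h0 := Real.arccos_le_pi_div_two.mp hh
      have hden : (0:ℝ) < Real.sin s * Real.sin (D / 2) := by positivity
      have := (le_div_iff₀ hden).mp h0
      linarith
    linarith
  -- geometric contradiction
  have key : ∀ c : ℝ, d ≤ c → c ≤ D / 2 + s → Real.cos c < Real.cos (D / 2) * Real.cos s := by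
    intro c hdc hcs
    rcases le_or_gt c Real.pi with hcπ | hcπ
    · have hA : Real.cos c ≤ Real.cos d :=
        Real.cos_le_cos_of_nonneg_of_le_pi hd0.le hcπ hdc
      have hB : Real.cos (d + ε) < Real.cos s :=
        Real.strictAntiOn_cos ⟨hs_pos.le, by linarith⟩ ⟨by linarith, hdε.le⟩ hs_lt
      have hC : Real.cos (D / 2) ≤ Real.cos (t / 2) :=
        Real.cos_le_cos_of_nonneg_of_le_pi (by linarith) (by linarith) (by linarith)
      have hD' : Real.cos (d + ε) < 0 :=
        Real.cos_neg_of_pi_div_two_lt_of_lt (by linarith) (by linarith)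
      have hE : Real.cos (t / 2) * Real.cos (d + ε) ≤ Real.cos (D / 2) * Real.cos (d + ε) :=
        mul_le_mul_of_nonpos_right hC hD'.le
      have hE2 : Real.cos (D / 2) * Real.cos (d + ε) < Real.cos (D / 2) * Real.cos s :=
        mul_lt_mul_of_pos_left hB hcosD2
      linarith
    · have hc2π : D / 2 + s < 2 * Real.pi := by linarith
      have hA : Real.cos c ≤ Real.cos (D / 2 + s) := by
        have e1 : Real.cos c = Real.cos (2 * Real.pi - c) := (Real.cos_two_pi_sub c).symm
        have e2 : Real.cos (D / 2 + s) = Real.cos (2 * Real.pi - (D / 2 + s)) :=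
          (Real.cos_two_pi_sub _).symm
        rw [e1, e2]
        apply Real.cos_le_cos_of_nonneg_of_le_pi (by linarith) (by linarith) (by linarith)
      have hB : Real.cos (D / 2 + s) =
          Real.cos (D / 2) * Real.cos s - Real.sin (D / 2) * Real.sin s := Real.cos_add _ _
      have hpos : 0 < Real.sin (D / 2) * Real.sin s := mul_pos hsinD2 hsins
      linarith
  rcases hone with hc | hc
  · have hd_le : d ≤ dist xh yh := by
      have h3 := hf.dist_le xh yh
      rw [hfx, hfy] at h3
      rw [hd_def]; exact h3
    have htri : dist xh yh ≤ D / 2 + s := by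
      calc dist xh yh ≤ dist xh mh + dist mh yh := dist_triangle xh mh yh
        _ = D / 2 + s := by rw [dist_comm xh mh, hmx, hs_def]
    have := key (dist xh yh) hd_le htri
    linarith
  · have hd_le : d ≤ dist yh zh := by
      have h3 := hf.dist_le yh zh
      rw [hfy, hfz] at h3
      calc d = dist z y := hzy.symm
        _ = dist y z := dist_comm z y
        _ ≤ dist yh zh := h3
    have htri : dist yh zh ≤ D / 2 + s := by
      calc dist yh zh ≤ dist yh mh + dist mh zh := dist_triangle yh mh zh
        _ = s + D / 2 := by rw [dist_comm yh mh, hmz, hs_def]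
        _ = D / 2 + s := by ring
    have := key (dist yh zh) hd_le htri
    rw [mul_comm (Real.cos s) (Real.cos (D / 2))] at hc
    linarith
end

section
/- Let f : M → X be a submetry from a complete Riemannian manifold with sec ≥ 1 that respects the boundary of a closed convex saturated set C = f⁻¹(f(C)) ⊆ M. Then the distance function to ∂C is constant along every fiber f⁻¹(z) contained in the interior of C. -/
open Metric

/-- Let `f : M → X` be a submetry from a complete Riemannian manifold with `sec ≥ 1`,
and let `C` be a closed convex set saturated by fibers of `f` (`C = f⁻¹(f(C))`) whose
For a submetry `f` respecting the boundary of `C`, the distance to `∂C` at `p` is at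
most that at `q` whenever `f p = f q`. -/
lemma submetry_infDist_frontier_le {M X : Type*} [MetricSpace M] [MetricSpace X]
    (f : M → X) (hf : IsSubmetry f) (C : Set M)
    (hresp : ∀ z : X, (f ⁻¹' {z} ∩ frontier C).Nonempty → f ⁻¹' {z} ⊆ frontier C)
    (hF : (frontier C).Nonempty)
    (p q : M) (hpq : f p = f q) :
    Metric.infDist p (frontier C) ≤ Metric.infDist q (frontier C) := by
  refine le_of_forall_pos_lt_add ?_
  intro ε hε
  obtain ⟨b, hbF, hb⟩ := (Metric.infDist_lt_iff hF).1
    (show Metric.infDist q (frontier C) < Metric.infDist q (frontier C) + ε/2 by linarith)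
  -- `f` is 1-Lipschitz: `dist (f q) (f b) ≤ dist q b`
  have hlip : dist (f q) (f b) ≤ dist q b := by
    refine le_of_forall_pos_lt_add ?_
    intro δ hδ
    have hr : (0:ℝ) < dist q b + δ := by positivity
    have hmem : f b ∈ f '' Metric.ball q (dist q b + δ) :=
      ⟨b, by simp [Metric.mem_ball, dist_comm]; linarith, rfl⟩
    rw [hf q _ hr] at hmem
    simpa [Metric.mem_ball, dist_comm] using hmem
  -- lift `f b` close to `p`
  have hr2 : (0:ℝ) < dist (f p) (f b) + ε/2 := by positivity
  have hmem2 : f b ∈ Metric.ball (f p) (dist (f p) (f b) + ε/2) := by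
    simp [Metric.mem_ball, dist_comm]; linarith
  rw [← hf p _ hr2] at hmem2
  obtain ⟨m, hm, hfm⟩ := hmem2
  have hmF : m ∈ frontier C :=
    hresp (f b) ⟨b, rfl, hbF⟩ (by simpa [Set.mem_preimage] using hfm)
  have h1 : Metric.infDist p (frontier C) ≤ dist p m := Metric.infDist_le_dist_of_mem hmF
  have h2 : dist p m < dist (f p) (f b) + ε/2 := by simpa [Metric.mem_ball, dist_comm] using hm
  have h3 : dist (f p) (f b) ≤ dist q b := hpq ▸ hlip
  linarith

/-- Let `f : M → X` be a submetry from a complete Riemannian manifold with `sec ≥ 1`,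
and let `C` be a closed convex set saturated by fibers of `f` (`C = f⁻¹(f(C))`) whose
boundary is respected by `f` (any fiber meeting `∂C` lies in `∂C`).  Then the distance
function to `∂C` is constant along every fiber contained in the interior of `C`. -/
theorem dist_to_boundary_constant_on_fibers {M X : Type*}
    [MetricSpace M] [CompleteSpace M] [MetricSpace X]
    (hgeo : GeodesicSpace M) (hcurv : CurvGeOne M)
    (f : M → X) (hf : IsSubmetry f)
    (C : Set M) (hCclosed : IsClosed C) (hCconv : IsConvexSet C)
    (hsat : C = f ⁻¹' (f '' C))
    (hresp : ∀ z : X, (f ⁻¹' {z} ∩ frontier C).Nonempty → f ⁻¹' {z} ⊆ frontier C) :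
    ∀ z : X, f ⁻¹' {z} ⊆ interior C →
      ∀ p ∈ f ⁻¹' {z}, ∀ q ∈ f ⁻¹' {z},
        Metric.infDist p (frontier C) = Metric.infDist q (frontier C) := by
  intro z _ p hp q hq
  rcases Set.eq_empty_or_nonempty (frontier C) with hF | hF
  · simp [hF]
  · have hpq : f p = f q := by
      simp only [Set.mem_preimage, Set.mem_singleton_iff] at hp hq
      rw [hp, hq]
    exact le_antisymm
      (submetry_infDist_frontier_le f hf C hresp hF p q hpq)
      (submetry_infDist_frontier_le f hf C hresp hF q p hpq.symm)
end
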